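/- A metric space X has asymptotic property C if and only if trasdim(X) ≤ α for some countable ordinal α. -/

import Mathlib

open Metric Set Function

namespace APC

variable {X Y : Type*}

/-- A family `𝒰` of subsets of a metric space is `r`-disjoint if any two distinct members
are at distance at least `r`. -/
def RDisjoint [MetricSpace X] (r : ℝ) (𝒰 : Set (Set X)) : Prop :=
  ∀ U ∈ 𝒰, ∀ V ∈ 𝒰, U ≠ V → ∀ x ∈ U, ∀ y ∈ V, r ≤ dist x y

/-- A family `𝒰` is `R`-bounded if every member has diameter at most `R`. -/
def RBounded [MetricSpace X] (R : ℝ) (𝒰 : Set (Set X)) : Prop :=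
  ∀ U ∈ 𝒰, ∀ x ∈ U, ∀ y ∈ U, dist x y ≤ R

/-- A family is uniformly bounded if it is `R`-bounded for some `R > 0`. -/
def UnifBounded [MetricSpace X] (𝒰 : Set (Set X)) : Prop :=
  ∃ R : ℝ, 0 < R ∧ RBounded R 𝒰

/-- `asdim X ≤ n`. -/
def AsdimLE (X : Type*) [MetricSpace X] (n : ℕ) : Prop :=
  ∀ r : ℝ, 0 < r → ∃ 𝒰 : Fin (n + 1) → Set (Set X),
    (∀ i, UnifBounded (𝒰 i)) ∧ (∀ i, RDisjoint r (𝒰 i)) ∧ (⋃ i, ⋃₀ 𝒰 i) = Set.univ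

/-- `X` has finite asymptotic dimension. -/
def HasFiniteAsdim (X : Type*) [MetricSpace X] : Prop := ∃ n : ℕ, AsdimLE X n

/-- Asymptotic property C. -/
def HasAPC (X : Type*) [MetricSpace X] : Prop :=
  ∀ R : ℕ → ℝ, (∀ i, 0 < R i) → StrictMono R →
    ∃ n : ℕ, ∃ 𝒰 : Fin (n + 1) → Set (Set X),
      (∀ i, UnifBounded (𝒰 i)) ∧ (∀ i : Fin (n + 1), RDisjoint (R i) (𝒰 i)) ∧
      (⋃ i, ⋃₀ 𝒰 i) = Set.univ

/-- `M^a`, the derivative of a collection of finite nonempty subsets of `ℕ`. -/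
def deriv (M : Set (Finset ℕ)) (a : ℕ) : Set (Finset ℕ) :=
  {τ | τ.Nonempty ∧ a ∉ τ ∧ insert a τ ∈ M}

/-- `OrdLE α M` means `Ord M ≤ α` in the sense of Radul: either `M = ∅`
(so that `Ord M = 0`), or `Ord M^a < α` for every `a : ℕ`.  Defined by
well-founded recursion on the ordinal `α`. -/
def OrdLE : Ordinal.{0} → Set (Finset ℕ) → Prop :=
  Ordinal.lt_wf.fix (C := fun _ => Set (Finset ℕ) → Prop)
    (fun α IH M => M = ∅ ∨ ∀ a : ℕ, ∃ β : Ordinal.{0}, ∃ hβ : β < α, IH β hβ (deriv M a))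

/-- The collection `A(X,d)` of finite nonempty subsets `σ ⊆ ℕ` such that there is no
covering of `X` by uniformly bounded families `𝒰ᵢ` (`i ∈ σ`), each `i`-disjoint. -/
def AClass (X : Type*) [MetricSpace X] : Set (Finset ℕ) :=
  {σ | σ.Nonempty ∧ ¬ ∃ 𝒰 : ℕ → Set (Set X),
      (∀ i ∈ σ, UnifBounded (𝒰 i)) ∧ (∀ i ∈ σ, RDisjoint (i : ℝ) (𝒰 i)) ∧
      (⋃ i ∈ σ, ⋃₀ 𝒰 i) = Set.univ}

/-- `trasdim X ≤ α`. -/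
def TrasdimLE (X : Type*) [MetricSpace X] (α : Ordinal.{0}) : Prop :=
  OrdLE α (AClass X)

/-- The `(m,n)`-DTUT property: disjointness of the `(m,n)`-tiling through uniform
translation. -/
def DTUT (X : Type*) [MetricSpace X] (m n : ℕ) : Prop :=
  ∃ F : Fin m → ℕ,
    ∀ h : ℕ+ → ℕ+, ∀ k : Fin (m + 1) → ℕ+, StrictMono k →
      ∃ C : (Fin m → ℕ+) → Fin (n + 1) → Set (Set X),
      ∃ D : (Fin m → ℕ+) → (i : Fin m) → Fin (F i + 1) → Set (Set X),
        ∀ l : Fin m → ℕ+, (∀ r : Fin m, l r ≤ h (k r.succ)) →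
          ((∀ j, UnifBounded (C l j)) ∧
           (∀ i s, UnifBounded (D l i s)) ∧
           (∀ j, RDisjoint ((k 0 : ℕ) : ℝ) (C l j)) ∧
           (∀ (i : Fin m) (s : Fin (F i + 1)), RDisjoint ((k i.succ : ℕ) : ℝ) (D l i s)) ∧
           ((⋃ j, ⋃₀ C l j) ∪ (⋃ i, ⋃ s, ⋃₀ D l i s) = Set.univ)) ∧
          (∀ (i : Fin m) (s : Fin (F i + 1)),
            (∀ t : ℕ+, t ≤ h (k i.succ) →
              (⋃₀ D (Function.update l i t) i s).Nonempty) ∧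
            (∀ t t' : ℕ+, t ≤ h (k i.succ) → t' ≤ h (k i.succ) → t ≠ t' →
              Disjoint (⋃₀ D (Function.update l i t) i s)
                (⋃₀ D (Function.update l i t') i s)) ∧
            RDisjoint ((k i.succ : ℕ) : ℝ)
              (⋃ t ∈ {t : ℕ+ | t ≤ h (k i.succ)}, D (Function.update l i t) i s))

/-- The word length of `g` with respect to the symmetrized generating set `S ∪ S⁻¹`. -/
noncomputable def wordLength {G : Type*} [Group G] (S : Set G) (g : G) : ℕ :=
  sInf {n : ℕ | ∃ L : List G, (∀ x ∈ L, x ∈ S ∨ x⁻¹ ∈ S) ∧ L.prod = g ∧ L.length = n}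

/-- A group is FC if every conjugacy class is finite. -/
def IsFCGroup (G : Type*) [Group G] : Prop :=
  ∀ x : G, Set.Finite {y : G | ∃ g : G, g * x * g⁻¹ = y}

/-- A metric on a countable discrete space is proper if every ball is finite. -/
def ProperMet (X : Type*) [MetricSpace X] : Prop :=
  ∀ (x : X) (R : ℝ), (Metric.closedBall x R).Finite

/-- Left invariance of a metric on a group. -/
def LeftInvariant (G : Type*) [Group G] [MetricSpace G] : Prop :=
  ∀ g x y : G, dist (g * x) (g * y) = dist x y

/-- Bornologous maps. -/
def Bornologous [MetricSpace X] [MetricSpace Y] (f : X → Y) : Prop :=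
  ∀ R : ℝ, 0 < R → ∃ P : ℝ, 0 < P ∧ ∀ x y : X, dist x y < R → dist (f x) (f y) < P

/-- Coarse embeddings. -/
def CoarseEmbedding [MetricSpace X] [MetricSpace Y] (f : X → Y) : Prop :=
  ∃ ρminus ρplus : ℝ → ℝ, Monotone ρminus ∧ Monotone ρplus ∧
    Filter.Tendsto ρminus Filter.atTop Filter.atTop ∧
    (∀ x y : X, ρminus (dist x y) ≤ dist (f x) (f y) ∧ dist (f x) (f y) ≤ ρplus (dist x y))

/-- Coarse equivalences: coarse embeddings with coarsely dense image. -/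
def CoarseEquiv [MetricSpace X] [MetricSpace Y] (f : X → Y) : Prop :=
  CoarseEmbedding f ∧ ∃ C : ℝ, 0 < C ∧ ∀ y : Y, ∃ x : X, dist y (f x) ≤ C

end APC

/-!
Both conditions say that the hereditary family `A(X,d)` has no infinite branch, i.e. no
strictly increasing `b : ℕ → ℕ` all of whose initial segments `{b 0, …, b n}` lie in `A(X,d)`.
For property C this is a reformulation, since radii `R i` can be traded for integers
`b i ≥ R i`. For the ordinal side, `Ord M ≤ α` forces every injective branch to leave `M`
after finitely many steps, by induction on `α`. Conversely, if there is no infinite branch, the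
tree of `M` (where `σ ∪ {a}` is a child of `σ`) is well founded, and `Ord M^σ ≤ rank σ + 1` by
induction along it; the ranks are countable because the tree is.
-/

namespace APC

universe u

section Combinatorics

variable {M : Set (Finset ℕ)}

lemma ordLE_iff {α : Ordinal.{0}} :
    OrdLE α M ↔ M = ∅ ∨ ∀ a : ℕ, ∃ β : Ordinal.{0}, ∃ _ : β < α, OrdLE β (deriv M a) :=
  iff_of_eq (congrFun (Ordinal.lt_wf.fix_eq (C := fun _ => Set (Finset ℕ) → Prop)
    (fun α IH M => M = ∅ ∨ ∀ a : ℕ, ∃ β : Ordinal.{0}, ∃ hβ : β < α, IH β hβ (deriv M a)) α) M)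

lemma ordLE_empty (α : Ordinal.{0}) : OrdLE α ∅ :=
  ordLE_iff.2 (Or.inl rfl)

def IsHereditary (M : Set (Finset ℕ)) : Prop :=
  ∀ σ ∈ M, ∀ τ ⊆ σ, τ.Nonempty → τ ∈ M

def IsBranch (M : Set (Finset ℕ)) (b : ℕ → ℕ) : Prop :=
  ∀ n, (Finset.range (n + 1)).image b ∈ M

lemma insert_image_range_succ (b : ℕ → ℕ) (n : ℕ) :
    insert (b 0) ((Finset.range (n + 1)).image (fun k => b (k + 1))) =
      (Finset.range (n + 2)).image b := by
  rw [Finset.range_add_one' (n + 1), Finset.image_insert, Finset.map_eq_image,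
    Finset.image_image]
  rfl

lemma OrdLE.not_isBranch {α : Ordinal.{0}} (hM : OrdLE α M) {b : ℕ → ℕ}
    (hb : Function.Injective b) : ¬IsBranch M b := by
  induction α using WellFoundedLT.induction generalizing M b with
  | ind α IH =>
    intro hbranch
    rcases ordLE_iff.1 hM with rfl | hderiv
    · exact hbranch 0
    obtain ⟨β, hβα, hβ⟩ := hderiv (b 0)
    refine IH β hβα hβ (b := fun k => b (k + 1)) (fun i j h => Nat.succ_injective (hb h))
      fun n => ⟨?_, ?_, ?_⟩
    · exact ⟨b 1, Finset.mem_image_of_mem _ (Finset.mem_range.2 n.succ_pos)⟩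
    · simp only [Finset.mem_image, not_exists, not_and]
      exact fun k _ h => k.succ_ne_zero (hb h)
    · rw [insert_image_range_succ]
      exact hbranch (n + 1)

lemma IsBranch.comp_strictMono
    (hdc : IsHereditary M) {b : ℕ → ℕ} (hb : IsBranch M b)
    {φ : ℕ → ℕ} (hφ : StrictMono φ) : IsBranch M (b ∘ φ) := by
  intro n
  refine hdc _ (hb (φ n)) _ ?_ (by simp)
  intro x hx
  obtain ⟨k, hk, rfl⟩ := Finset.mem_image.1 hx
  refine Finset.mem_image_of_mem b (Finset.mem_range.2 ?_)
  exact Nat.lt_succ_of_le (hφ.monotone (Nat.le_of_lt_succ (Finset.mem_range.1 hk)))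

lemma not_isBranch_of_injective
    (hdc : IsHereditary M)
    (h : ∀ b : ℕ → ℕ, StrictMono b → ¬IsBranch M b) {b : ℕ → ℕ}
    (hb : Function.Injective b) : ¬IsBranch M b := fun hbranch => by
  obtain ⟨φ, hφ, hbφ⟩ := Filter.strictMono_subseq_of_tendsto_atTop hb.nat_tendsto_atTop
  exact h _ hbφ (hbranch.comp_strictMono hdc hφ)

def IsChild (M : Set (Finset ℕ)) (τ σ : Finset ℕ) : Prop :=
  τ ∈ M ∧ ∃ a ∉ σ, τ = insert a σ

/-- The elements added along an infinite descending chain of the tree form an injective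
branch. -/
lemma wellFounded_isChild (hdc : IsHereditary M)
    (h : ∀ b : ℕ → ℕ, StrictMono b → ¬IsBranch M b) : WellFounded (IsChild M) := by
  refine wellFounded_iff_isEmpty_descending_chain.2 ⟨fun ⟨σ, hσ⟩ => ?_⟩
  choose hmem a ha hins using hσ
  have hmono : Monotone σ := monotone_nat_of_le_succ fun n => by
    rw [hins n]
    exact Finset.subset_insert _ _
  have hsub : ∀ n, (Finset.range (n + 1)).image a ⊆ σ (n + 1) := by
    intro n x hx
    obtain ⟨k, hk, rfl⟩ := Finset.mem_image.1 hx
    have : a k ∈ σ (k + 1) := hins k ▸ Finset.mem_insert_self _ _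
    exact hmono (by simpa using hk) this
  have hinj : Function.Injective a := Function.Injective.of_lt_imp_ne fun i j hij heq =>
    ha j (heq ▸ hmono hij (hins i ▸ Finset.mem_insert_self _ _))
  exact not_isBranch_of_injective hdc h hinj fun n =>
    hdc _ (hmem n) _ (hsub n) (by simp)

/-- The ranks form an initial segment of the ordinals, so each rank has at most `#α`
predecessors. -/
lemma card_rank_le_aleph0 {α : Type u} [Countable α] (r : α → α → Prop) [IsWellFounded α r]
    (x : α) : (IsWellFounded.rank r x).card ≤ Cardinal.aleph0 := by
  have hIio : Set.Iio (IsWellFounded.rank r x) ⊆ Set.range (IsWellFounded.rank r) :=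
    fun o ho => IsWellFounded.mem_range_rank_of_le ho.le
  refine Cardinal.lift_le.{u + 1}.1 ?_
  calc Cardinal.lift.{u + 1} (IsWellFounded.rank r x).card
      = Cardinal.mk (Set.Iio (IsWellFounded.rank r x)) := (Cardinal.mk_Iio_ordinal _).symm
    _ ≤ Cardinal.lift.{u} (Cardinal.mk (Set.range (IsWellFounded.rank r))) := by
      rw [Cardinal.lift_id'.{u, u + 1}]
      exact Cardinal.mk_le_mk_of_subset hIio
    _ ≤ Cardinal.lift.{u + 1} (Cardinal.mk α) := Cardinal.mk_range_le_lift
    _ ≤ Cardinal.lift.{u + 1} Cardinal.aleph0 := Cardinal.lift_le.2 Cardinal.mk_le_aleph0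

/-- `M^σ` in the notation of the paper. -/
def iterDeriv (M : Set (Finset ℕ)) (σ : Finset ℕ) : Set (Finset ℕ) :=
  {τ | τ.Nonempty ∧ Disjoint τ σ ∧ τ ∪ σ ∈ M}

lemma iterDeriv_empty (hne : ∀ σ ∈ M, σ.Nonempty) : iterDeriv M ∅ = M := by
  ext τ
  simp only [iterDeriv, Finset.disjoint_empty_right, Finset.union_empty, true_and,
    Set.mem_ofPred_eq, and_iff_right_iff_imp]
  exact hne τ

lemma deriv_iterDeriv_of_notMem {σ : Finset ℕ} {a : ℕ} (ha : a ∉ σ) :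
    deriv (iterDeriv M σ) a = iterDeriv M (insert a σ) := by
  ext τ
  simp only [deriv, iterDeriv, Set.mem_ofPred_eq, Finset.insert_union, Finset.union_insert,
    Finset.disjoint_insert_left, Finset.disjoint_insert_right, Finset.insert_nonempty, true_and]
  tauto

lemma deriv_iterDeriv_of_mem {σ : Finset ℕ} {a : ℕ} (ha : a ∈ σ) :
    deriv (iterDeriv M σ) a = ∅ := by
  ext τ
  simp only [deriv, iterDeriv, Set.mem_ofPred_eq, Set.mem_empty_iff_false, iff_false]
  exact fun ⟨_, _, _, hdisj, _⟩ => Finset.disjoint_left.1 hdisj (Finset.mem_insert_self a τ) ha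

lemma iterDeriv_eq_empty (hdc : IsHereditary M) {σ : Finset ℕ}
    (hσ : σ.Nonempty) (hσM : σ ∉ M) : iterDeriv M σ = ∅ :=
  Set.eq_empty_of_forall_notMem fun _ ⟨_, _, hτ⟩ =>
    hσM (hdc _ hτ _ Finset.subset_union_right hσ)

lemma ordLE_succ_rank_iterDeriv [IsWellFounded (Finset ℕ) (IsChild M)]
    (hdc : IsHereditary M) (σ : Finset ℕ) :
    OrdLE (Order.succ (IsWellFounded.rank (IsChild M) σ)) (iterDeriv M σ) := by
  induction σ using IsWellFounded.induction (IsChild M) with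
  | ind σ IH =>
    have hzero : ∃ β, ∃ _ : β < Order.succ (IsWellFounded.rank (IsChild M) σ), OrdLE β ∅ :=
      ⟨0, Order.bot_lt_succ _, ordLE_empty 0⟩
    refine ordLE_iff.2 (Or.inr fun a => ?_)
    by_cases ha : a ∈ σ
    · rwa [deriv_iterDeriv_of_mem ha]
    rw [deriv_iterDeriv_of_notMem ha]
    by_cases hM : insert a σ ∈ M
    · have hchild : IsChild M (insert a σ) σ := ⟨hM, a, ha, rfl⟩
      exact ⟨_, Order.succ_lt_succ (IsWellFounded.rank_lt_of_rel hchild), IH _ hchild⟩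
    · rwa [iterDeriv_eq_empty hdc (Finset.insert_nonempty a σ) hM]

theorem exists_countable_ordLE_iff (hne : ∀ σ ∈ M, σ.Nonempty)
    (hdc : IsHereditary M) :
    (∃ α : Ordinal.{0}, α.card ≤ Cardinal.aleph0 ∧ OrdLE α M) ↔
      ∀ b : ℕ → ℕ, StrictMono b → ¬IsBranch M b := by
  refine ⟨fun ⟨α, _, hα⟩ b hb => hα.not_isBranch hb.injective, fun h => ?_⟩
  have : IsWellFounded (Finset ℕ) (IsChild M) := ⟨wellFounded_isChild hdc h⟩
  refine ⟨Order.succ (IsWellFounded.rank (IsChild M) ∅), ?_, ?_⟩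
  · rw [Order.succ_eq_add_one, Ordinal.card_add_one, Cardinal.add_le_aleph0]
    exact ⟨card_rank_le_aleph0 _ _, Cardinal.one_le_aleph0⟩
  · simpa only [iterDeriv_empty hne] using ordLE_succ_rank_iterDeriv hdc ∅

end Combinatorics

section Metric

variable {X : Type*} [MetricSpace X]

lemma RDisjoint.mono {r r' : ℝ} (h : r ≤ r') {𝒰 : Set (Set X)} (hd : RDisjoint r' 𝒰) :
    RDisjoint r 𝒰 :=
  fun U hU V hV hUV x hx y hy => h.trans (hd U hU V hV hUV x hx y hy)

lemma mem_aClass_of_subset {σ τ : Finset ℕ} (hσ : σ ∈ AClass X) (hτσ : τ ⊆ σ)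
    (hτ : τ.Nonempty) : τ ∈ AClass X := by
  refine ⟨hτ, fun ⟨𝒰, hbdd, hdisj, hcov⟩ => hσ.2 ?_⟩
  classical
  refine ⟨fun i => if i ∈ τ then 𝒰 i else ∅, fun i _ => ?_, fun i _ => ?_, ?_⟩
  · by_cases hi : i ∈ τ
    · simpa [hi] using hbdd i hi
    · simpa [hi] using ⟨1, one_pos, by simp [RBounded]⟩
  · by_cases hi : i ∈ τ
    · simpa [hi] using hdisj i hi
    · simp [hi, RDisjoint]
  · refine Set.eq_univ_of_subset (Set.iUnion₂_subset fun i hi => ?_) hcov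
    exact Set.subset_biUnion_of_mem (u := fun i => ⋃₀ (if i ∈ τ then 𝒰 i else ∅))
      (hτσ hi) |>.trans' (by simp [hi])

lemma biUnion_image_range {α : Type*} (f : ℕ → ℕ) (g : ℕ → Set α) (n : ℕ) :
    ⋃ i ∈ (Finset.range (n + 1)).image f, g i = ⋃ j : Fin (n + 1), g (f j) := by
  ext x
  simp only [Finset.set_biUnion_finset_image, Set.mem_iUnion, Finset.mem_range, Fin.exists_iff,
    exists_prop]

lemma image_range_notMem_aClass_iff {f : ℕ → ℕ} (hf : Function.Injective f) (n : ℕ) :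
    (Finset.range (n + 1)).image f ∉ AClass X ↔
      ∃ 𝒰 : Fin (n + 1) → Set (Set X), (∀ i, UnifBounded (𝒰 i)) ∧
        (∀ i : Fin (n + 1), RDisjoint (f i : ℝ) (𝒰 i)) ∧ (⋃ i, ⋃₀ 𝒰 i) = Set.univ := by
  have hne : ((Finset.range (n + 1)).image f).Nonempty := by simp
  simp only [AClass, Set.mem_ofPred_eq, hne, true_and, not_not, Finset.forall_mem_image,
    Finset.mem_range, biUnion_image_range]
  constructor
  · rintro ⟨𝒰, hbdd, hdisj, hcov⟩
    exact ⟨fun i => 𝒰 (f i), fun i => hbdd i.2, fun i => hdisj i.2, hcov⟩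
  · rintro ⟨𝒰, hbdd, hdisj, hcov⟩
    have hinj : Function.Injective (fun i : Fin (n + 1) => f i) := hf.comp Fin.val_injective
    set 𝒱 := Function.extend (fun i : Fin (n + 1) => f i) 𝒰 (fun _ => ∅)
    have h𝒱 : ∀ i : Fin (n + 1), 𝒱 (f i) = 𝒰 i := hinj.extend_apply 𝒰 _
    refine ⟨𝒱, fun k hk => ?_, fun k hk => ?_, by simpa only [h𝒱] using hcov⟩
    · exact (h𝒱 ⟨k, hk⟩).symm ▸ hbdd ⟨k, hk⟩
    · exact (h𝒱 ⟨k, hk⟩).symm ▸ hdisj ⟨k, hk⟩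

/-- Shifting `b` by one makes the radii positive even when `b 0 = 0`; conversely any increasing
radii are dominated by the strictly increasing integers `⌈R i⌉₊ + i`. -/
theorem hasAPC_iff_forall_not_isBranch_aClass :
    HasAPC X ↔ ∀ b : ℕ → ℕ, StrictMono b → ¬IsBranch (AClass X) b := by
  constructor
  · intro hapc b hb hbranch
    obtain ⟨n, 𝒰, hbdd, hdisj, hcov⟩ :=
      hapc (fun i => b i + 1) (fun i => by positivity) fun i j hij => by simpa using hb hij
    refine (image_range_notMem_aClass_iff hb.injective n).2 ?_ (hbranch n)
    exact ⟨𝒰, hbdd, fun i => (hdisj i).mono (by simp), hcov⟩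
  · intro h R _ hR
    set m : ℕ → ℕ := fun i => ⌈R i⌉₊ + i
    have hm : StrictMono m := strictMono_nat_of_lt_succ fun i => by
      have := Nat.ceil_mono (hR.monotone (Nat.le_add_right i 1))
      simp only [m]
      omega
    have hRm : ∀ i, R i ≤ m i := fun i => (Nat.le_ceil _).trans (by simp [m])
    obtain ⟨n, hn⟩ := not_forall.1 (h m hm)
    obtain ⟨𝒰, hbdd, hdisj, hcov⟩ := (image_range_notMem_aClass_iff hm.injective n).1 hn
    exact ⟨n, 𝒰, hbdd, fun i => (hdisj i).mono (hRm i), hcov⟩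

end Metric

end APC

open APC Set

/-- A metric space has asymptotic property C if and only if its
transfinite asymptotic dimension is at most some countable ordinal. -/
theorem hasAPC_iff_trasdim_le_countable_ordinal {X : Type*} [MetricSpace X] :
    HasAPC X ↔ ∃ α : Ordinal.{0}, α.card ≤ Cardinal.aleph0 ∧ TrasdimLE X α := by
  rw [hasAPC_iff_forall_not_isBranch_aClass]
  exact (exists_countable_ordLE_iff (fun σ hσ => hσ.1)
    fun _ hσ _ hτσ hτ => mem_aClass_of_subset hσ hτσ hτ).symm
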